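/- arXiv:1802.07618 — 4 statements merged into one kernel-verified Lean document; each statement's English description precedes it below -/
import Mathlib

section
/- For all multi-indices α, β ∈ ℕⁿ one has ∫_{ℝⁿ} x^β g_α(x) dx = 1 if β = α, and ∫_{ℝⁿ} x^β g_α(x) dx = 0 if β ≠ α. That is, the family (g_α)_{α ∈ ℕⁿ} of Schwartz functions is dual to the monomial basis (x^β)_{β ∈ ℕⁿ}. -/
open MeasureTheory Filter
open scoped FourierTransform

/-- The Schwartz family dual to the monomial basis:
`g_α := 𝓕⁻¹(ξ ↦ χ(ξ)(-2πiξ)^α / α!)` (Mathlib's Fourier normalization). -/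
noncomputable def gA {n : ℕ} (χ : EuclideanSpace ℝ (Fin n) → ℝ) (α : Fin n → ℕ) :
    EuclideanSpace ℝ (Fin n) → ℂ :=
  𝓕⁻ (fun ξ => (χ ξ : ℂ) *
      (∏ j, (-2 * (Real.pi : ℂ) * Complex.I * (ξ j : ℂ)) ^ α j) / ∏ j, ((Nat.factorial (α j)) : ℂ))

namespace GADual

open SchwartzMap Complex
open scoped SchwartzMap Real

variable {n : ℕ}

/-- `k`-th standard basis vector of `EuclideanSpace ℝ (Fin n)`. -/
noncomputable def Ev (k : Fin n) : EuclideanSpace ℝ (Fin n) := EuclideanSpace.single k 1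

/-- The monomial `x ^ γ`. -/
def Pm (γ : Fin n → ℕ) (x : EuclideanSpace ℝ (Fin n)) : ℂ := ∏ j, (x j : ℂ) ^ γ j

/-- Decrement the `k`-th exponent. -/
def dec1 (k : Fin n) (γ : Fin n → ℕ) : Fin n → ℕ := Function.update γ k (γ k - 1)

/-- Iterated coordinate partial derivatives of a Schwartz function, along a list of
coordinates. -/
noncomputable def Dl (l : List (Fin n)) (ψ : 𝓢(EuclideanSpace ℝ (Fin n), ℂ)) :
    𝓢(EuclideanSpace ℝ (Fin n), ℂ) :=
  l.foldl (fun φ j => LineDeriv.lineDerivOpCLM ℝ 𝓢(EuclideanSpace ℝ (Fin n), ℂ) (Ev j) φ) ψ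

/-- Iterated coordinate partial derivatives of a plain function. -/
noncomputable def Dfun (l : List (Fin n)) (q : EuclideanSpace ℝ (Fin n) → ℂ) :
    EuclideanSpace ℝ (Fin n) → ℂ :=
  l.foldl (fun q j => fun x => fderiv ℝ q x (Ev j)) q

/-- The combinatorial coefficient produced by differentiating a monomial along `l`. -/
def coeffL : List (Fin n) → (Fin n → ℕ) → ℕ
  | [], _ => 1
  | j :: l, γ => γ j * coeffL l (dec1 j γ)

/-- The exponent left over after differentiating along `l`. -/
def decL (l : List (Fin n)) (γ : Fin n → ℕ) : Fin n → ℕ := l.foldl (fun γ j => dec1 j γ) γ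

/-- The list with `β j` copies of each `j`. -/
def lOf (β : Fin n → ℕ) : List (Fin n) :=
  (List.finRange n).flatMap fun j => List.replicate (β j) j

lemma hasFDerivAt_Pm (γ : Fin n → ℕ) (x : EuclideanSpace ℝ (Fin n)) :
    HasFDerivAt (Pm γ)
      (∑ j, (∏ l ∈ Finset.univ.erase j, (x l : ℂ) ^ γ l) •
        (((γ j : ℂ) * (x j : ℂ) ^ (γ j - 1)) •
          (Complex.ofRealCLM.comp (EuclideanSpace.proj j)))) x := by
  have h : ∀ j ∈ Finset.univ, HasFDerivAt (fun x : EuclideanSpace ℝ (Fin n) => (x j : ℂ) ^ γ j)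
      (((γ j : ℂ) * (x j : ℂ) ^ (γ j - 1)) •
        (Complex.ofRealCLM.comp (EuclideanSpace.proj j))) x := by
    intro j _
    have hL : HasFDerivAt (fun x : EuclideanSpace ℝ (Fin n) => ((x j : ℝ) : ℂ))
        (Complex.ofRealCLM.comp (EuclideanSpace.proj j)) x :=
      (Complex.ofRealCLM.comp (EuclideanSpace.proj j)).hasFDerivAt
    exact (hasDerivAt_pow (γ j) _).comp_hasFDerivAt x hL
  exact HasFDerivAt.finset_prod h

lemma fderiv_Pm_apply (γ : Fin n → ℕ) (x : EuclideanSpace ℝ (Fin n)) (k : Fin n) :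
    fderiv ℝ (Pm γ) x (Ev k) = (γ k : ℂ) * Pm (dec1 k γ) x := by
  rw [(hasFDerivAt_Pm γ x).fderiv]
  have hLeval : ∀ j : Fin n,
      (Complex.ofRealCLM.comp (EuclideanSpace.proj (𝕜 := ℝ) j)) (Ev k)
        = if j = k then 1 else 0 := by
    intro j
    have h0 : (EuclideanSpace.proj (𝕜 := ℝ) j) (Ev k) = (Ev k) j := rfl
    simp only [ContinuousLinearMap.comp_apply, h0, Ev, EuclideanSpace.single_apply]
    split <;> simp_all
  rw [ContinuousLinearMap.sum_apply]
  rw [Finset.sum_eq_single k]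
  · rw [ContinuousLinearMap.smul_apply, ContinuousLinearMap.smul_apply, hLeval k, if_pos rfl]
    have hprod : Pm (dec1 k γ) x
        = (x k : ℂ) ^ (γ k - 1) * ∏ l ∈ Finset.univ.erase k, (x l : ℂ) ^ γ l := by
      rw [Pm, ← Finset.mul_prod_erase Finset.univ _ (Finset.mem_univ k)]
      congr 1
      · simp [dec1]
      · exact Finset.prod_congr rfl fun l hl => by
          simp [dec1, Function.update_of_ne (Finset.ne_of_mem_erase hl)]
    rw [hprod]
    simp only [smul_eq_mul, mul_one]
    ring
  · intro j _ hj
    rw [ContinuousLinearMap.smul_apply, ContinuousLinearMap.smul_apply, hLeval j, if_neg hj]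
    simp
  · simp

lemma differentiableAt_Pm (γ : Fin n → ℕ) (x : EuclideanSpace ℝ (Fin n)) :
    DifferentiableAt ℝ (Pm γ) x := (hasFDerivAt_Pm γ x).differentiableAt

lemma Pm_apply_zero (γ : Fin n → ℕ) : Pm γ 0 = if γ = 0 then 1 else 0 := by
  by_cases h : γ = 0
  · simp [Pm, h]
  · obtain ⟨j, hj⟩ : ∃ j, γ j ≠ 0 := by
      by_contra h'
      push_neg at h'
      exact h (funext h')
    rw [if_neg h, Pm]
    apply Finset.prod_eq_zero (Finset.mem_univ j)
    have : ((0 : EuclideanSpace ℝ (Fin n)) j : ℂ) = 0 := by simp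
    rw [this, zero_pow hj]

lemma Dfun_const_mul_Pm (l : List (Fin n)) :
    ∀ (c : ℂ) (γ : Fin n → ℕ),
      Dfun l (fun x => c * Pm γ x) = fun x => c * (coeffL l γ : ℂ) * Pm (decL l γ) x := by
  induction l with
  | nil =>
    intro c γ
    funext x
    simp [Dfun, coeffL, decL]
  | cons j l ih =>
    intro c γ
    have h1 : (fun x => fderiv ℝ (fun x => c * Pm γ x) x (Ev j))
        = fun x => (c * (γ j : ℂ)) * Pm (dec1 j γ) x := by
      funext x
      rw [fderiv_const_mul (differentiableAt_Pm γ x) c]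
      rw [ContinuousLinearMap.smul_apply, fderiv_Pm_apply]
      simp [smul_eq_mul]; ring
    have h2 : Dfun (j :: l) (fun x => c * Pm γ x)
        = Dfun l (fun x => (c * (γ j : ℂ)) * Pm (dec1 j γ) x) := by
      show Dfun l (fun x => fderiv ℝ (fun x => c * Pm γ x) x (Ev j)) = _
      rw [h1]
    rw [h2, ih]
    funext x
    have hc : coeffL (j :: l) γ = γ j * coeffL l (dec1 j γ) := rfl
    have hd : decL (j :: l) γ = decL l (dec1 j γ) := rfl
    rw [hc, hd]
    push_cast
    ring

lemma Dl_eventuallyEq (l : List (Fin n)) :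
    ∀ (ψ : 𝓢(EuclideanSpace ℝ (Fin n), ℂ)) (q : EuclideanSpace ℝ (Fin n) → ℂ),
      (⇑ψ =ᶠ[nhds 0] q) → ⇑(Dl l ψ) =ᶠ[nhds 0] Dfun l q := by
  induction l with
  | nil => exact fun ψ q h => h
  | cons j l ih =>
    intro ψ q h
    have h' : ⇑(LineDeriv.lineDerivOpCLM ℝ 𝓢(EuclideanSpace ℝ (Fin n), ℂ) (Ev j) ψ) =ᶠ[nhds 0]
        fun x => fderiv ℝ q x (Ev j) := by
      filter_upwards [h.fderiv (𝕜 := ℝ)] with x hx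
      rw [LineDeriv.lineDerivOpCLM_apply, SchwartzMap.lineDerivOp_apply_eq_fderiv, hx]
    exact ih _ _ h'

lemma Dl_cons (j : Fin n) (l : List (Fin n)) (ψ : 𝓢(EuclideanSpace ℝ (Fin n), ℂ)) :
    Dl (j :: l) ψ = Dl l (LineDeriv.lineDerivOpCLM ℝ 𝓢(EuclideanSpace ℝ (Fin n), ℂ) (Ev j) ψ) := rfl

/-- The key integration lemma: integrating a monomial (encoded as a list of coordinates)
against the inverse Fourier transform of a Schwartz function. -/
lemma integral_listProd_fourierInv (l : List (Fin n)) :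
    ∀ ψ : 𝓢(EuclideanSpace ℝ (Fin n), ℂ),
      ∫ x : EuclideanSpace ℝ (Fin n), (l.map fun j => (x j : ℂ)).prod * 𝓕⁻ (⇑ψ) x
        = ((-(2 * (Real.pi : ℂ) * Complex.I))⁻¹) ^ l.length * Dl l ψ 0 := by
  induction l with
  | nil =>
    intro ψ
    simp only [List.map_nil, List.prod_nil, one_mul, List.length_nil, pow_zero, Dl,
      List.foldl_nil]
    have hint : Integrable (𝓕 (⇑ψ)) := by
      have h := (SchwartzMap.fourierTransformCLM ℝ ψ).integrable (μ := volume)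
      rwa [SchwartzMap.fourierTransformCLM_apply] at h
    have hinv := MeasureTheory.Integrable.fourier_fourierInv_eq (f := ⇑ψ)
      ψ.integrable hint (ψ.continuous.continuousAt (x := 0))
    rw [← hinv, Real.fourier_eq]
    simp
  | cons k l ih =>
    intro ψ
    have hc : (-(2 * (Real.pi : ℂ) * Complex.I)) ≠ 0 := by
      simp [Real.pi_ne_zero, Complex.I_ne_zero, Complex.ofReal_eq_zero]
    have hdint : Integrable (fderiv ℝ (⇑ψ)) := by
      have h := (SchwartzMap.fderivCLM ℝ _ _ ψ).integrable (μ := volume)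
      have hco : ⇑(SchwartzMap.fderivCLM ℝ _ _ ψ) = fderiv ℝ (⇑ψ) :=
        funext fun x => SchwartzMap.fderivCLM_apply (𝕜 := ℝ) ψ x
      rwa [hco] at h
    have key : ∀ x : EuclideanSpace ℝ (Fin n),
        𝓕⁻ (fun v => fderiv ℝ (⇑ψ) v (Ev k)) x
          = -(2 * (Real.pi : ℂ) * Complex.I) * (x k : ℂ) * 𝓕⁻ (⇑ψ) x := by
      intro x
      rw [Real.fourierInv_eq_fourier_neg,
        Real.fourierInv_eq_fourier_neg,
        ← Real.fourier_continuousLinearMap_apply hdint,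
        Real.fourier_fderiv ψ.integrable ψ.differentiable hdint]
      rw [VectorFourier.fourierSMulRight_apply]
      have hinner : ((-innerSL ℝ) (-x)) (Ev k) = x k := by
        simp [Ev, real_inner_smul_left, EuclideanSpace.inner_single_right]
      rw [hinner]
      rw [smul_eq_mul, Complex.real_smul]
      ring
    have hco : ⇑(LineDeriv.lineDerivOpCLM ℝ 𝓢(EuclideanSpace ℝ (Fin n), ℂ) (Ev k) ψ) = fun v => fderiv ℝ (⇑ψ) v (Ev k) :=
      funext fun v => SchwartzMap.lineDerivOp_apply_eq_fderiv (Ev k) ψ v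
    have hpt : ∀ x : EuclideanSpace ℝ (Fin n),
        ((k :: l).map fun j => (x j : ℂ)).prod * 𝓕⁻ (⇑ψ) x
          = (-(2 * (Real.pi : ℂ) * Complex.I))⁻¹ *
            ((l.map fun j => (x j : ℂ)).prod * 𝓕⁻ (⇑(LineDeriv.lineDerivOpCLM ℝ 𝓢(EuclideanSpace ℝ (Fin n), ℂ) (Ev k) ψ)) x) := by
      intro x
      rw [List.map_cons, List.prod_cons, hco, key x]
      have hπ : (Real.pi : ℂ) ≠ 0 := Complex.ofReal_ne_zero.mpr Real.pi_ne_zero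
      field_simp [hπ, Complex.I_ne_zero]
    calc ∫ x : EuclideanSpace ℝ (Fin n), ((k :: l).map fun j => (x j : ℂ)).prod * 𝓕⁻ (⇑ψ) x
        = ∫ x : EuclideanSpace ℝ (Fin n), (-(2 * (Real.pi : ℂ) * Complex.I))⁻¹ *
            ((l.map fun j => (x j : ℂ)).prod *
              𝓕⁻ (⇑(LineDeriv.lineDerivOpCLM ℝ 𝓢(EuclideanSpace ℝ (Fin n), ℂ) (Ev k) ψ)) x) := by
          exact integral_congr_ae (Filter.Eventually.of_forall hpt)
      _ = (-(2 * (Real.pi : ℂ) * Complex.I))⁻¹ *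
            ∫ x : EuclideanSpace ℝ (Fin n), (l.map fun j => (x j : ℂ)).prod *
              𝓕⁻ (⇑(LineDeriv.lineDerivOpCLM ℝ 𝓢(EuclideanSpace ℝ (Fin n), ℂ) (Ev k) ψ)) x :=
          integral_const_mul _ _
      _ = (-(2 * (Real.pi : ℂ) * Complex.I))⁻¹ *
            (((-(2 * (Real.pi : ℂ) * Complex.I))⁻¹) ^ l.length *
              Dl l (LineDeriv.lineDerivOpCLM ℝ 𝓢(EuclideanSpace ℝ (Fin n), ℂ) (Ev k) ψ) 0) := by
          rw [ih]
      _ = ((-(2 * (Real.pi : ℂ) * Complex.I))⁻¹) ^ (k :: l).length * Dl (k :: l) ψ 0 := by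
          rw [Dl_cons, List.length_cons, pow_succ]
          ring

/-! ### Combinatorial lemmas -/

lemma coeffL_congr : ∀ (l : List (Fin n)) (γ₁ γ₂ : Fin n → ℕ),
    (∀ j ∈ l, γ₁ j = γ₂ j) → coeffL l γ₁ = coeffL l γ₂ := by
  intro l
  induction l with
  | nil => intro _ _ _; rfl
  | cons k l ih =>
    intro γ₁ γ₂ h
    show γ₁ k * coeffL l (dec1 k γ₁) = γ₂ k * coeffL l (dec1 k γ₂)
    rw [h k (List.mem_cons_self), ih (dec1 k γ₁) (dec1 k γ₂)]
    intro j hj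
    by_cases hjk : j = k
    · subst hjk
      simp [dec1, h j (List.mem_cons_self)]
    · simp [dec1, Function.update_of_ne hjk, h j (List.mem_cons_of_mem _ hj)]

lemma decL_append (l₁ l₂ : List (Fin n)) (γ : Fin n → ℕ) :
    decL (l₁ ++ l₂) γ = decL l₂ (decL l₁ γ) := List.foldl_append

lemma coeffL_append : ∀ (l₁ l₂ : List (Fin n)) (γ : Fin n → ℕ),
    coeffL (l₁ ++ l₂) γ = coeffL l₁ γ * coeffL l₂ (decL l₁ γ) := by
  intro l₁
  induction l₁ with
  | nil => intro l₂ γ; simp [coeffL, decL]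
  | cons k l ih =>
    intro l₂ γ
    show γ k * coeffL (l ++ l₂) (dec1 k γ) = γ k * coeffL l (dec1 k γ) * coeffL l₂ _
    rw [ih]
    have : decL (k :: l) γ = decL l (dec1 k γ) := rfl
    rw [this, mul_assoc]

lemma decL_replicate (j : Fin n) : ∀ (m : ℕ) (γ : Fin n → ℕ),
    decL (List.replicate m j) γ = Function.update γ j (γ j - m) := by
  intro m
  induction m with
  | zero => intro γ; simp [decL, Function.update_eq_self]
  | succ m ih =>
    intro γ
    have h1 : decL (List.replicate (m + 1) j) γ = decL (List.replicate m j) (dec1 j γ) := rfl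
    rw [h1, ih]
    funext i
    by_cases hij : i = j
    · subst hij
      simp [dec1, Nat.sub_sub, Nat.add_comm]
    · simp [dec1, Function.update_of_ne hij]

lemma coeffL_replicate (j : Fin n) : ∀ (m : ℕ) (γ : Fin n → ℕ),
    coeffL (List.replicate m j) γ = (γ j).descFactorial m := by
  intro m
  induction m with
  | zero => intro γ; rfl
  | succ m ih =>
    intro γ
    have h1 : coeffL (List.replicate (m + 1) j) γ = γ j * coeffL (List.replicate m j) (dec1 j γ) :=
      rfl
    rw [h1, ih]
    have h2 : (dec1 j γ) j = γ j - 1 := by simp [dec1]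
    rw [h2]
    rcases Nat.eq_zero_or_pos (γ j) with h | h
    · simp [h]
    · obtain ⟨t, ht⟩ := Nat.exists_eq_add_of_lt h
      rw [show γ j = t + 1 by omega, Nat.succ_descFactorial_succ, Nat.add_sub_cancel]

lemma mem_of_mem_flatMap {β : Fin n → ℕ} {j : Fin n} {L : List (Fin n)}
    (h : j ∈ L.flatMap fun i => List.replicate (β i) i) : j ∈ L := by
  rw [List.mem_flatMap] at h
  obtain ⟨a, ha, hj⟩ := h
  rw [List.eq_of_mem_replicate hj]
  exact ha

lemma decL_flatMap (β : Fin n → ℕ) : ∀ (L : List (Fin n)), L.Nodup → ∀ γ : Fin n → ℕ,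
    decL (L.flatMap fun i => List.replicate (β i) i) γ
      = fun j => if j ∈ L then γ j - β j else γ j := by
  intro L
  induction L with
  | nil => intro _ γ; funext j; simp [decL]
  | cons a L ih =>
    intro hnd γ
    have hna : a ∉ L := (List.nodup_cons.mp hnd).1
    have hndL : L.Nodup := (List.nodup_cons.mp hnd).2
    rw [List.flatMap_cons, decL_append, decL_replicate, ih hndL]
    funext j
    by_cases hj : j = a
    · subst hj
      simp [if_neg hna, Function.update_self]
    · by_cases hjL : j ∈ L
      · simp [hjL, hj, Function.update_of_ne hj, List.mem_cons]
      · have : ¬(j ∈ a :: L) := by simp [hj, hjL]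
        simp [this, hjL, Function.update_of_ne hj]

lemma coeffL_flatMap (β : Fin n → ℕ) : ∀ (L : List (Fin n)), L.Nodup → ∀ γ : Fin n → ℕ,
    coeffL (L.flatMap fun i => List.replicate (β i) i) γ
      = (L.map fun j => (γ j).descFactorial (β j)).prod := by
  intro L
  induction L with
  | nil => intro _ γ; rfl
  | cons a L ih =>
    intro hnd γ
    have hna : a ∉ L := (List.nodup_cons.mp hnd).1
    have hndL : L.Nodup := (List.nodup_cons.mp hnd).2
    rw [List.flatMap_cons, coeffL_append, coeffL_replicate, decL_replicate]
    have hagree : coeffL (L.flatMap fun i => List.replicate (β i) i)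
          (Function.update γ a (γ a - β a))
        = coeffL (L.flatMap fun i => List.replicate (β i) i) γ := by
      apply coeffL_congr
      intro j hj
      have hjL : j ∈ L := mem_of_mem_flatMap hj
      have : j ≠ a := fun h => hna (h ▸ hjL)
      simp [Function.update_of_ne this]
    rw [hagree, ih hndL]
    simp

lemma map_lOf_prod (β : Fin n → ℕ) (f : Fin n → ℂ) :
    (((lOf β).map f)).prod = ∏ j, f j ^ β j := by
  rw [lOf]
  have : ∀ L : List (Fin n),
      ((L.flatMap fun j => List.replicate (β j) j).map f).prod
        = (L.map fun j => f j ^ β j).prod := by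
    intro L
    induction L with
    | nil => simp
    | cons a L ih =>
      rw [List.flatMap_cons, List.map_append, List.prod_append, ih]
      simp [List.map_replicate, List.prod_replicate]
  rw [this, ← Fin.prod_univ_def]

lemma length_lOf (β : Fin n → ℕ) : (lOf β).length = ∑ j, β j := by
  rw [lOf]
  have : ∀ L : List (Fin n),
      (L.flatMap fun j => List.replicate (β j) j).length = (L.map β).sum := by
    intro L
    induction L with
    | nil => simp
    | cons a L ih => simp [List.flatMap_cons, ih]
  rw [this, ← Fin.sum_univ_def]

lemma decL_lOf (β γ : Fin n → ℕ) : decL (lOf β) γ = fun j => γ j - β j := by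
  rw [lOf, decL_flatMap β _ (List.nodup_finRange n)]
  funext j
  simp [List.mem_finRange]

lemma coeffL_lOf (β γ : Fin n → ℕ) :
    coeffL (lOf β) γ = ∏ j, (γ j).descFactorial (β j) := by
  rw [lOf, coeffL_flatMap β _ (List.nodup_finRange n), ← Fin.prod_univ_def]

lemma contDiff_finset_prod {ι : Type*} (s : Finset ι)
    (g : ι → EuclideanSpace ℝ (Fin n) → ℂ) (h : ∀ i ∈ s, ContDiff ℝ (⊤ : ℕ∞) (g i)) :
    ContDiff ℝ (⊤ : ℕ∞) fun x => ∏ i ∈ s, g i x := by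
  classical
  induction s using Finset.cons_induction with
  | empty => simpa using contDiff_const
  | cons a s ha ih =>
    simp only [Finset.prod_cons]
    exact (h a (Finset.mem_cons_self a s)).mul
      (ih fun i hi => h i (Finset.mem_cons_of_mem hi))

end GADual

open GADual Complex SchwartzMap
open scoped SchwartzMap

/-- The family `(g_α)` is dual to the monomial basis `(x^β)`. -/
theorem gA_dual_monomials (n : ℕ) (χ : EuclideanSpace ℝ (Fin n) → ℝ)
    (hχ_smooth : ContDiff ℝ (⊤ : ℕ∞) χ)
    (hχ_supp : Function.support χ ⊆ {ξ : EuclideanSpace ℝ (Fin n) | ∀ j, |ξ j| ≤ 1})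
    (hχ_one : ∀ᶠ ξ in nhds (0 : EuclideanSpace ℝ (Fin n)), χ ξ = 1)
    (α β : Fin n → ℕ) :
    ∫ x : EuclideanSpace ℝ (Fin n), (∏ j, (x j : ℂ) ^ β j) * gA χ α x
      = if β = α then 1 else 0 := by
  classical
  set F : EuclideanSpace ℝ (Fin n) → ℂ := fun ξ => (χ ξ : ℂ) *
      (∏ j, (-2 * (Real.pi : ℂ) * Complex.I * (ξ j : ℂ)) ^ α j) /
        ∏ j, ((Nat.factorial (α j)) : ℂ) with hF
  -- Smoothness of F
  have hFsmooth : ContDiff ℝ (⊤ : ℕ∞) F := by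
    apply ContDiff.div_const
    apply ContDiff.mul
    · exact Complex.ofRealCLM.contDiff.comp hχ_smooth
    · apply contDiff_finset_prod
      intro j _
      apply ContDiff.pow
      exact contDiff_const.mul
        (Complex.ofRealCLM.comp (EuclideanSpace.proj (𝕜 := ℝ) j)).contDiff
  -- Compact support of F
  have hFsupp : HasCompactSupport F := by
    apply HasCompactSupport.intro (K := Metric.closedBall 0 (Real.sqrt n))
      (isCompact_closedBall _ _)
    intro ξ hξ
    have hχ0 : χ ξ = 0 := by
      by_contra hne
      have hmem : ξ ∈ Function.support χ := hne
      have hb := hχ_supp hmem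
      apply hξ
      rw [Metric.mem_closedBall, dist_zero_right, EuclideanSpace.norm_eq]
      calc Real.sqrt (∑ j, ‖ξ j‖ ^ 2) ≤ Real.sqrt (∑ _j : Fin n, (1 : ℝ)) := by
            apply Real.sqrt_le_sqrt
            apply Finset.sum_le_sum
            intro j _
            have := hb j
            rw [Real.norm_eq_abs]
            nlinarith [abs_nonneg (ξ j)]
        _ = Real.sqrt n := by simp
    simp [hF, hχ0]
  -- F as a Schwartz function
  have hFdecay : ∀ (k m : ℕ), ∃ C, ∀ x,
      ‖x‖ ^ k * ‖iteratedFDeriv ℝ m F x‖ ≤ C := by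
    intro k m
    have h1 : HasCompactSupport (iteratedFDeriv ℝ m F) := hFsupp.iteratedFDeriv m
    have h2 : Continuous (iteratedFDeriv ℝ m F) :=
      hFsmooth.continuous_iteratedFDeriv (by exact_mod_cast le_top)
    set G : EuclideanSpace ℝ (Fin n) → ℝ := fun x => ‖x‖ ^ k * ‖iteratedFDeriv ℝ m F x‖
      with hG
    have hGc : Continuous G := ((continuous_norm.pow k).mul h2.norm)
    have hGs : HasCompactSupport G := by
      apply h1.mono
      intro x hx
      simp only [hG, Function.mem_support] at hx ⊢
      intro hc
      exact hx (by simp [hc])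
    obtain ⟨C, hC⟩ := hGs.exists_bound_of_continuous hGc
    exact ⟨C, fun x => (Real.le_norm_self (G x)).trans (hC x)⟩
  let ψ₀ : 𝓢(EuclideanSpace ℝ (Fin n), ℂ) := ⟨F, hFsmooth.of_le (by simp), hFdecay⟩
  have hψ₀ : ⇑ψ₀ = F := rfl
  have hgA : gA χ α = 𝓕⁻ (⇑ψ₀) := rfl
  set c : ℂ := -(2 * (Real.pi : ℂ) * Complex.I) with hcdef
  have hc : c ≠ 0 := by
    simp [hcdef, Real.pi_ne_zero, Complex.I_ne_zero, Complex.ofReal_eq_zero]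
  -- Step 1: rewrite the integral using the list encoding and the key integration lemma
  have step1 : ∫ x : EuclideanSpace ℝ (Fin n), (∏ j, (x j : ℂ) ^ β j) * gA χ α x
      = c⁻¹ ^ (lOf β).length * Dl (lOf β) ψ₀ 0 := by
    rw [show (fun x : EuclideanSpace ℝ (Fin n) => (∏ j, (x j : ℂ) ^ β j) * gA χ α x)
        = fun x => (((lOf β).map fun j => (x j : ℂ)).prod) * 𝓕⁻ (⇑ψ₀) x from
      funext fun x => by rw [map_lOf_prod, hgA]]
    exact integral_listProd_fourierInv (lOf β) ψ₀
  -- Step 2: evaluate the iterated derivative at 0 using the local polynomial form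
  set C0 : ℂ := (∏ j, c ^ α j) / (∏ j, ((Nat.factorial (α j)) : ℂ)) with hC0
  have hev : ⇑ψ₀ =ᶠ[nhds 0] fun ξ => C0 * Pm α ξ := by
    filter_upwards [hχ_one] with ξ hξ
    show F ξ = C0 * Pm α ξ
    have hprod : ∏ j, (-2 * (Real.pi : ℂ) * Complex.I * (ξ j : ℂ)) ^ α j
        = (∏ j, c ^ α j) * Pm α ξ := by
      rw [Pm, ← Finset.prod_mul_distrib]
      exact Finset.prod_congr rfl fun j _ => by rw [hcdef]; ring
    rw [hF]
    simp only [hξ, Complex.ofReal_one]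
    rw [hprod, hC0]
    ring
  have step2 : Dl (lOf β) ψ₀ 0 = C0 * (coeffL (lOf β) α : ℂ) * Pm (decL (lOf β) α) 0 := by
    have h0 : Dl (lOf β) ψ₀ 0 = Dfun (lOf β) (fun ξ => C0 * Pm α ξ) 0 :=
      (Dl_eventuallyEq (lOf β) ψ₀ _ hev).eq_of_nhds
    rw [h0, Dfun_const_mul_Pm]
  rw [step1, step2, coeffL_lOf, decL_lOf, Pm_apply_zero]
  by_cases hβα : β = α
  · subst hβα
    rw [if_pos rfl, if_pos (funext fun j => by simp)]
    have hdesc : ∀ j : Fin n, (β j).descFactorial (β j) = (β j).factorial :=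
      fun j => Nat.descFactorial_self (β j)
    have hfact_ne : (∏ j, ((Nat.factorial (β j)) : ℂ)) ≠ 0 := by
      apply Finset.prod_ne_zero_iff.mpr
      intro j _
      exact_mod_cast (Nat.factorial_ne_zero (β j))
    rw [length_lOf]
    have hcast : ((∏ j, (β j).descFactorial (β j) : ℕ) : ℂ)
        = ∏ j, ((Nat.factorial (β j)) : ℂ) := by
      push_cast [hdesc]
      rfl
    rw [hcast, hC0]
    rw [Finset.prod_pow_eq_pow_sum]
    field_simp
    rw [one_div, inv_pow, inv_mul_cancel₀ (pow_ne_zero _ hc)]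
  · rw [if_neg hβα]
    by_cases hle : ∀ j, α j ≤ β j
    · -- some descFactorial vanishes
      obtain ⟨j, hj⟩ : ∃ j, α j ≠ β j := by
        by_contra h'
        push_neg at h'
        exact hβα (funext fun j => (h' j).symm)
      have hlt : α j < β j := lt_of_le_of_ne (hle j) hj
      have hzero : (∏ i, (α i).descFactorial (β i)) = 0 := by
        apply Finset.prod_eq_zero (Finset.mem_univ j)
        exact Nat.descFactorial_eq_zero_iff_lt.mpr hlt
      rw [hzero]
      simp
    · -- the remaining exponent is nonzero
      push_neg at hle
      obtain ⟨j, hj⟩ := hle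
      have hne : (fun i => α i - β i) ≠ 0 := by
        intro h'
        have := congrFun h' j
        simp only [Pi.zero_apply] at this
        omega
      rw [if_neg hne]
      simp
end

section
/- For every integer j ≥ 0 and every x ∈ C^{j,−1}, one has (ε∘d)^{j+2}(δx) = (−1)^{j+1} · d((ε∘d)^{j+1} x). Equivalently, the maps Φ_j := (ε∘d)^{j+1} : C^{j,−1} → C^{−1,j} intertwine the two differentials up to sign: Φ_{j+1} ∘ δ = (−1)^{j+1} d ∘ Φ_j. -/
/-!
Write `T = ε ∘ d`. Since `d` commutes with `δ` and `εδ + δε = id`, one has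
`T (δ y) = d y - δ (T y)`, and `T` kills `d`-exact elements because `d² = 0`. Iterating,
`T^{n+1} (δ y) = (-1)^n (d (T^n y) - δ (T^{n+1} y))`. For `x ∈ C^{j,-1}` take `n = j + 1`:
`T^{j+2} x` lies in `C^{-2, j+1} = 0`, so the `δ`-term drops out.
-/

namespace BicomplexHomotopy

variable {R M : Type*} [Semiring R] [AddCommGroup M] [Module R M]
  (C : ℤ → ℤ → Submodule R M) {d δ' ε : Module.End R M}

theorem pow_apply_mem
    (hd_map : ∀ j k : ℤ, ∀ x ∈ C j k, d x ∈ C j (k + 1))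
    (hε_map : ∀ j k : ℤ, ∀ x ∈ C j k, ε x ∈ C (j - 1) k)
    (n : ℕ) {p q : ℤ} {y : M} (hy : y ∈ C p q) :
    ((ε * d) ^ n) y ∈ C (p - n) (q + n) := by
  induction n with
  | zero => simpa using hy
  | succ n ih =>
    have h := hε_map _ _ _ (hd_map _ _ _ ih)
    rwa [pow_succ', Module.End.mul_apply, Nat.cast_succ, ← sub_sub, ← add_assoc]

theorem mul_apply_delta
    (hd_map : ∀ j k : ℤ, ∀ x ∈ C j k, d x ∈ C j (k + 1))
    (hdδ : ∀ j k : ℤ, ∀ x ∈ C j k, d (δ' x) = δ' (d x))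
    (hεδ : ∀ j k : ℤ, ∀ x ∈ C j k, ε (δ' x) + δ' (ε x) = x)
    {p q : ℤ} {y : M} (hy : y ∈ C p q) :
    (ε * d) (δ' y) = d y - δ' ((ε * d) y) := by
  rw [Module.End.mul_apply, Module.End.mul_apply, hdδ p q y hy]
  exact eq_sub_of_add_eq (hεδ p (q + 1) (d y) (hd_map p q y hy))

theorem pow_succ_apply_d
    (hdd : ∀ j k : ℤ, ∀ x ∈ C j k, d (d x) = 0)
    (n : ℕ) {p q : ℤ} {y : M} (hy : y ∈ C p q) :
    ((ε * d) ^ (n + 1)) (d y) = 0 := by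
  rw [pow_succ, Module.End.mul_apply, Module.End.mul_apply, hdd p q y hy, map_zero, map_zero]

theorem pow_succ_apply_delta
    (hd_map : ∀ j k : ℤ, ∀ x ∈ C j k, d x ∈ C j (k + 1))
    (hε_map : ∀ j k : ℤ, ∀ x ∈ C j k, ε x ∈ C (j - 1) k)
    (hdd : ∀ j k : ℤ, ∀ x ∈ C j k, d (d x) = 0)
    (hdδ : ∀ j k : ℤ, ∀ x ∈ C j k, d (δ' x) = δ' (d x))
    (hεδ : ∀ j k : ℤ, ∀ x ∈ C j k, ε (δ' x) + δ' (ε x) = x)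
    (n : ℕ) {p q : ℤ} {y : M} (hy : y ∈ C p q) :
    ((ε * d) ^ (n + 1)) (δ' y)
      = ((-1 : ℤ) ^ n) • (d (((ε * d) ^ n) y) - δ' (((ε * d) ^ (n + 1)) y)) := by
  induction n generalizing p q y with
  | zero => simpa using mul_apply_delta C hd_map hdδ hεδ hy
  | succ n ih =>
    set T := ε * d
    have hTy : T y ∈ C (p - 1) (q + 1) := hε_map _ _ _ (hd_map _ _ _ hy)
    have hshift (m : ℕ) : (T ^ m) (T y) = (T ^ (m + 1)) y := by
      rw [pow_succ]; rfl
    calc (T ^ (n + 1 + 1)) (δ' y)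
        = (T ^ (n + 1)) (d y) - (T ^ (n + 1)) (δ' (T y)) := by
          rw [pow_succ, Module.End.mul_apply, mul_apply_delta C hd_map hdδ hεδ hy, map_sub]
      _ = -(T ^ (n + 1)) (δ' (T y)) := by rw [pow_succ_apply_d C hdd n hy, zero_sub]
      _ = ((-1 : ℤ) ^ (n + 1)) • (d ((T ^ (n + 1)) y) - δ' ((T ^ (n + 1 + 1)) y)) := by
          rw [ih hTy, hshift, hshift, pow_succ (-1 : ℤ) n, mul_neg_one, neg_smul]

end BicomplexHomotopy

open BicomplexHomotopy in
theorem Phi_chain_map_general {R M : Type*} [CommRing R] [AddCommGroup M] [Module R M]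
    (C : ℤ → ℤ → Submodule R M)
    (hCzero : ∀ j k : ℤ, (j ≤ -2 ∨ k ≤ -2) → C j k = ⊥)
    (d δ' ε : Module.End R M)
    (hd_map : ∀ j k : ℤ, ∀ x ∈ C j k, d x ∈ C j (k + 1))
    (hε_map : ∀ j k : ℤ, ∀ x ∈ C j k, ε x ∈ C (j - 1) k)
    (hdd : ∀ j k : ℤ, ∀ x ∈ C j k, d (d x) = 0)
    (hdδ : ∀ j k : ℤ, ∀ x ∈ C j k, d (δ' x) = δ' (d x))
    (hεδ : ∀ j k : ℤ, ∀ x ∈ C j k, ε (δ' x) + δ' (ε x) = x)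
    (j : ℕ) (x : M) (hx : x ∈ C (j : ℤ) (-1)) :
    ((ε * d) ^ (j + 2)) (δ' x) = ((-1 : ℤ) ^ (j + 1)) • d (((ε * d) ^ (j + 1)) x) := by
  have hvanish : ((ε * d) ^ (j + 2)) x = 0 := by
    have h := pow_apply_mem C hd_map hε_map (j + 2) hx
    rwa [show (j : ℤ) - ((j + 2 : ℕ) : ℤ) = -2 by push_cast; ring,
      hCzero (-2) _ (Or.inl le_rfl), Submodule.mem_bot] at h
  rw [pow_succ_apply_delta C hd_map hε_map hdd hdδ hεδ (j + 1) hx, hvanish, map_zero, sub_zero]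

/-- The maps `Φ_j = (ε∘d)^{j+1}` intertwine the differentials up to sign:
on `C^{j,-1}`, `(εd)^{j+2} ∘ δ = (−1)^{j+1} d ∘ (εd)^{j+1}`. -/
theorem Phi_chain_map {R M : Type*} [CommRing R] [AddCommGroup M] [Module R M]
    (C : ℤ → ℤ → Submodule R M)
    (hCzero : ∀ j k : ℤ, (j ≤ -2 ∨ k ≤ -2) → C j k = ⊥)
    (d δ' ε : Module.End R M)
    (hd_map : ∀ j k : ℤ, ∀ x ∈ C j k, d x ∈ C j (k + 1))
    (hδ_map : ∀ j k : ℤ, ∀ x ∈ C j k, δ' x ∈ C (j + 1) k)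
    (hε_map : ∀ j k : ℤ, ∀ x ∈ C j k, ε x ∈ C (j - 1) k)
    (hdd : ∀ j k : ℤ, ∀ x ∈ C j k, d (d x) = 0)
    (hδδ : ∀ j k : ℤ, ∀ x ∈ C j k, δ' (δ' x) = 0)
    (hdδ : ∀ j k : ℤ, ∀ x ∈ C j k, d (δ' x) = δ' (d x))
    (hεδ : ∀ j k : ℤ, ∀ x ∈ C j k, ε (δ' x) + δ' (ε x) = x)
    (j : ℕ) (x : M) (hx : x ∈ C (j : ℤ) (-1)) :
    ((ε * d) ^ (j + 2)) (δ' x) = ((-1 : ℤ) ^ (j + 1)) • d (((ε * d) ^ (j + 1)) x) :=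
  Phi_chain_map_general C hCzero d δ' ε hd_map hε_map hdd hdδ hεδ j x hx
end

section
/- Define R_0 = 0 and, for i ≥ 1, R_i := Σ_{k=0}^{i−1} (−1)^k (P∘δ)^k ∘ P ∘ (ε∘d)^{k+1}. Then for every integer i ≥ 1, every j ∈ ℤ, and every x ∈ C^{j,−1}: (P∘δ)^i((ε∘d)^i x) = x − R_i(δx) − δ(R_{i−1} x). -/
/-!
Write `A = Pδ` and `B = εd`. On homogeneous elements the relations give `δB + Bδ = d`, `Bd = 0`,
`Ad + dA = δ` and `Aδ = 0`, hence `BδBᵏ = (-1)ᵏ Bᵏ⁺¹δ` and `Aᵏ⁺¹d = (-1)ᵏ (δAᵏ - dAᵏ⁺¹)`.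
Together with `Pd = 1 - dP` this gives
`Aᵏ⁺¹Bᵏ⁺¹ = AᵏBᵏ - AᵏdPBᵏ - (-1)ᵏ AᵏPBᵏ⁺¹δ`.
On `C^{j,-1}` the operators `AᵏPBᵏ` land in `C^{j,-2} = 0`, which turns the middle term into
`(-1)ᵏ⁻¹ δAᵏ⁻¹PBᵏ` (and into `dP = 0` for `k = 0`); summing over `k` telescopes to the formula.
-/
open Set

theorem Set.MapsTo.iterate_of_shift {α G : Type*} [AddMonoid G] {f : α → α} {C : G → Set α}
    {s : G} (hf : ∀ g, MapsTo f (C g) (C (g + s))) (n : ℕ) (g : G) :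
    MapsTo f^[n] (C g) (C (g + n • s)) := by
  induction n generalizing g with
  | zero => simpa using mapsTo_id (C g)
  | succ n ih =>
    rw [Function.iterate_succ, succ_nsmul', ← add_assoc]
    exact (ih (g + s)).comp (hf g)

section Homotopy

variable {R M : Type*} [Semiring R] [AddCommGroup M] [Module R M]

open Module.End

theorem Set.MapsTo.end_pow {f : Module.End R M} {H : Set M} (h : MapsTo f H H) (n : ℕ) :
    MapsTo ⇑(f ^ n) H H := by
  rw [coe_pow]
  exact h.iterate n

theorem apply_apply_pow_of_anticomm {B δ d : Module.End R M} {H : Set M} (hB : MapsTo B H H)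
    (hδB : ∀ y ∈ H, δ (B y) + B (δ y) = d y) (hBd : ∀ y ∈ H, B (d y) = 0) (k : ℕ) {y : M}
    (hy : y ∈ H) : B (δ ((B ^ k) y)) = ((-1 : ℤ) ^ k) • (B ^ (k + 1)) (δ y) := by
  induction k with
  | zero => simp
  | succ k ih =>
    have hk : (B ^ k) y ∈ H := hB.end_pow k hy
    calc B (δ ((B ^ (k + 1)) y)) = B (d ((B ^ k) y) - B (δ ((B ^ k) y))) := by
          rw [pow_succ', mul_apply, eq_sub_of_add_eq (hδB _ hk)]
      _ = -B (((-1 : ℤ) ^ k) • (B ^ (k + 1)) (δ y)) := by rw [map_sub, hBd _ hk, ih, zero_sub]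
      _ = ((-1 : ℤ) ^ (k + 1)) • (B ^ (k + 1 + 1)) (δ y) := by
          rw [map_zsmul, pow_succ' B (k + 1), mul_apply, pow_succ (-1 : ℤ) k, mul_neg_one, neg_smul]

theorem pow_succ_apply_of_anticomm {A d δ : Module.End R M} {H : Set M} (hA : MapsTo A H H)
    (hAd : ∀ z ∈ H, A (d z) + d (A z) = δ z) (hAδ : ∀ z ∈ H, A (δ z) = 0) (k : ℕ) {z : M}
    (hz : z ∈ H) :
    (A ^ (k + 1)) (d z) = ((-1 : ℤ) ^ k) • (δ ((A ^ k) z) - d ((A ^ (k + 1)) z)) := by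
  induction k generalizing z with
  | zero => simpa using eq_sub_of_add_eq (hAd z hz)
  | succ k ih =>
    calc (A ^ (k + 1 + 1)) (d z) = (A ^ k) (A (δ z)) - (A ^ (k + 1)) (d (A z)) := by
          rw [pow_succ, mul_apply, eq_sub_of_add_eq (hAd z hz), map_sub, pow_succ, mul_apply]
      _ = ((-1 : ℤ) ^ (k + 1)) • (δ ((A ^ (k + 1)) z) - d ((A ^ (k + 1 + 1)) z)) := by
          rw [hAδ z hz, map_zero, zero_sub, ih (hA hz), pow_succ (-1 : ℤ) k, mul_neg_one, neg_smul]
          simp only [pow_apply, Function.iterate_succ_apply]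

end Homotopy

section CechDeRham

variable {R M : Type*} [Semiring R] [AddCommGroup M] [Module R M]
  {d δ ε P : Module.End R M} {H : Set M}

open Module.End

variable (d δ ε P) in
/-- The operator `R_i` of the statement. -/
def chainHomotopy (i : ℕ) : Module.End R M :=
  ∑ k ∈ Finset.range i, ((-1 : ℤ) ^ k) • ((P * δ) ^ k * P * (ε * d) ^ (k + 1))

theorem chainHomotopy_zero : chainHomotopy d δ ε P 0 = 0 := Finset.sum_range_zero _

theorem chainHomotopy_succ_apply (i : ℕ) (y : M) :
    chainHomotopy d δ ε P (i + 1) y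
      = chainHomotopy d δ ε P i y + ((-1 : ℤ) ^ i) • ((P * δ) ^ i) (P (((ε * d) ^ (i + 1)) y)) := by
  rw [chainHomotopy, Finset.sum_range_succ]
  rfl

theorem delta_epsD_add_epsD_delta (hd : MapsTo d H H) (hεδ : ∀ y ∈ H, ε (δ y) + δ (ε y) = y)
    (hdδ : ∀ y ∈ H, d (δ y) = δ (d y)) (y : M) (hy : y ∈ H) :
    δ ((ε * d) y) + (ε * d) (δ y) = d y := by
  rw [mul_apply, mul_apply, hdδ y hy, add_comm]
  exact hεδ _ (hd hy)

theorem PDelta_d_add_d_PDelta (hδ : MapsTo δ H H) (hdP : ∀ y ∈ H, d (P y) + P (d y) = y)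
    (hdδ : ∀ y ∈ H, d (δ y) = δ (d y)) (z : M) (hz : z ∈ H) :
    (P * δ) (d z) + d ((P * δ) z) = δ z := by
  rw [mul_apply, mul_apply, ← hdδ z hz, add_comm]
  exact hdP _ (hδ hz)

theorem PDelta_pow_succ_epsD_pow_succ (hd : MapsTo d H H) (hε : MapsTo ε H H)
    (hdd : ∀ y ∈ H, d (d y) = 0) (hdδ : ∀ y ∈ H, d (δ y) = δ (d y))
    (hεδ : ∀ y ∈ H, ε (δ y) + δ (ε y) = y) (hdP : ∀ y ∈ H, d (P y) + P (d y) = y)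
    (k : ℕ) {x : M} (hx : x ∈ H) :
    ((P * δ) ^ (k + 1)) (((ε * d) ^ (k + 1)) x)
      = ((P * δ) ^ k) (((ε * d) ^ k) x) - ((P * δ) ^ k) (d (P (((ε * d) ^ k) x)))
        - ((-1 : ℤ) ^ k) • ((P * δ) ^ k) (P (((ε * d) ^ (k + 1)) (δ x))) := by
  have hB : MapsTo (ε * d) H H := hε.comp hd
  have hδB := delta_epsD_add_epsD_delta hd hεδ hdδ
  have hBd : ∀ y ∈ H, (ε * d) (d y) = 0 := fun y hy => by rw [mul_apply, hdd y hy, map_zero]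
  set w := ((ε * d) ^ k) x with hw_def
  have hw : w ∈ H := hB.end_pow k hx
  have hABw : (P * δ) ((ε * d) w)
      = w - d (P w) - ((-1 : ℤ) ^ k) • P (((ε * d) ^ (k + 1)) (δ x)) := by
    rw [mul_apply, eq_sub_of_add_eq (hδB w hw), map_sub, eq_sub_of_add_eq' (hdP w hw), hw_def,
      apply_apply_pow_of_anticomm hB hδB hBd k hx, map_zsmul]
  have hT : ((P * δ) ^ (k + 1)) (((ε * d) ^ (k + 1)) x) = ((P * δ) ^ k) ((P * δ) ((ε * d) w)) := by
    rw [pow_succ (P * δ) k, pow_succ' (ε * d) k]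
    rfl
  rw [hT, hABw, map_sub, map_sub, map_zsmul]

theorem delta_chainHomotopy_apply (hd : MapsTo d H H) (hδ : MapsTo δ H H) (hε : MapsTo ε H H)
    (hP : MapsTo P H H) (hδδ : ∀ y ∈ H, δ (δ y) = 0) (hdδ : ∀ y ∈ H, d (δ y) = δ (d y))
    (hdP : ∀ y ∈ H, d (P y) + P (d y) = y) {x : M} (hx : x ∈ H)
    (hvanish : ∀ k : ℕ, ((P * δ) ^ k) (P (((ε * d) ^ k) x)) = 0) (i : ℕ) :
    δ (chainHomotopy d δ ε P i x)
      = δ (chainHomotopy d δ ε P (i - 1) x) + ((P * δ) ^ i) (d (P (((ε * d) ^ i) x))) := by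
  cases i with
  | zero =>
    have hPx : P x = 0 := by simpa using hvanish 0
    simp [chainHomotopy_zero, hPx]
  | succ n =>
    have hz : P (((ε * d) ^ (n + 1)) x) ∈ H := hP ((hε.comp hd).end_pow (n + 1) hx)
    have hA : MapsTo (P * δ) H H := hP.comp hδ
    have hAδ : ∀ z ∈ H, (P * δ) (δ z) = 0 := fun z hz => by rw [mul_apply, hδδ z hz, map_zero]
    rw [pow_succ_apply_of_anticomm hA (PDelta_d_add_d_PDelta hδ hdP hdδ) hAδ n hz,
      hvanish (n + 1), map_zero, sub_zero, Nat.add_sub_cancel, chainHomotopy_succ_apply, map_add,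
      map_zsmul]

theorem PDelta_pow_epsD_pow_apply (hd : MapsTo d H H) (hδ : MapsTo δ H H) (hε : MapsTo ε H H)
    (hP : MapsTo P H H) (hdd : ∀ y ∈ H, d (d y) = 0) (hδδ : ∀ y ∈ H, δ (δ y) = 0)
    (hdδ : ∀ y ∈ H, d (δ y) = δ (d y)) (hεδ : ∀ y ∈ H, ε (δ y) + δ (ε y) = y)
    (hdP : ∀ y ∈ H, d (P y) + P (d y) = y) {x : M} (hx : x ∈ H)
    (hvanish : ∀ k : ℕ, ((P * δ) ^ k) (P (((ε * d) ^ k) x)) = 0) (i : ℕ) :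
    ((P * δ) ^ i) (((ε * d) ^ i) x)
      = x - chainHomotopy d δ ε P i (δ x) - δ (chainHomotopy d δ ε P (i - 1) x) := by
  induction i with
  | zero => simp [chainHomotopy_zero]
  | succ i ih =>
    rw [PDelta_pow_succ_epsD_pow_succ hd hε hdd hdδ hεδ hdP i hx, ih, chainHomotopy_succ_apply,
      Nat.add_sub_cancel, delta_chainHomotopy_apply hd hδ hε hP hδδ hdδ hdP hx hvanish i]
    abel

end CechDeRham

section Bigraded

variable {R M : Type*} [Semiring R] [AddCommGroup M] [Module R M]
  {d δ ε P : Module.End R M} {C : ℤ → ℤ → Submodule R M}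

open Module.End

theorem PDelta_pow_P_epsD_pow_eq_zero (hC : ∀ j k, k ≤ -2 → C j k = ⊥)
    (hd_map : ∀ j k : ℤ, ∀ x ∈ C j k, d x ∈ C j (k + 1))
    (hδ_map : ∀ j k : ℤ, ∀ x ∈ C j k, δ x ∈ C (j + 1) k)
    (hε_map : ∀ j k : ℤ, ∀ x ∈ C j k, ε x ∈ C (j - 1) k)
    (hP_map : ∀ j k : ℤ, ∀ x ∈ C j k, P x ∈ C j (k - 1)) {j : ℤ} {x : M} (hx : x ∈ C j (-1))
    (n : ℕ) : ((P * δ) ^ n) (P (((ε * d) ^ n) x)) = 0 := by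
  let C' : ℤ × ℤ → Set M := fun p => C p.1 p.2
  have hB : ∀ p, MapsTo (ε * d) (C' p) (C' (p + (-1, 1))) := fun p y hy => by
    simpa [C', sub_eq_add_neg] using hε_map _ _ _ (hd_map _ _ y hy)
  have hA : ∀ p, MapsTo (P * δ) (C' p) (C' (p + (1, -1))) := fun p y hy => by
    simpa [C', sub_eq_add_neg] using hP_map _ _ _ (hδ_map _ _ y hy)
  have hP' : ∀ p, MapsTo P (C' p) (C' (p + (0, -1))) := fun p y hy => by
    simpa [C', sub_eq_add_neg] using hP_map _ _ y hy
  have hmem := (MapsTo.iterate_of_shift hA n _) (hP' _ (MapsTo.iterate_of_shift hB n (j, -1) hx))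
  rw [← coe_pow, ← coe_pow, show ((j, -1) + n • (-1, 1) + (0, -1) + n • (1, -1) : ℤ × ℤ) = (j, -2)
    by ext <;> simp; ring] at hmem
  exact (Submodule.mem_bot R).1 (hC j (-2) le_rfl ▸ hmem)

end Bigraded

theorem PsiPhi_homotopic_id_general {R M : Type*} [CommRing R] [AddCommGroup M] [Module R M]
    (C : ℤ → ℤ → Submodule R M)
    (hCzero : ∀ j k : ℤ, (j ≤ -2 ∨ k ≤ -2) → C j k = ⊥)
    (d δ' ε P : Module.End R M)
    (hd_map : ∀ j k : ℤ, ∀ x ∈ C j k, d x ∈ C j (k + 1))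
    (hδ_map : ∀ j k : ℤ, ∀ x ∈ C j k, δ' x ∈ C (j + 1) k)
    (hε_map : ∀ j k : ℤ, ∀ x ∈ C j k, ε x ∈ C (j - 1) k)
    (hP_map : ∀ j k : ℤ, ∀ x ∈ C j k, P x ∈ C j (k - 1))
    (hdd : ∀ j k : ℤ, ∀ x ∈ C j k, d (d x) = 0)
    (hδδ : ∀ j k : ℤ, ∀ x ∈ C j k, δ' (δ' x) = 0)
    (hdδ : ∀ j k : ℤ, ∀ x ∈ C j k, d (δ' x) = δ' (d x))
    (hεδ : ∀ j k : ℤ, ∀ x ∈ C j k, ε (δ' x) + δ' (ε x) = x)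
    (hdP : ∀ j k : ℤ, ∀ x ∈ C j k, d (P x) + P (d x) = x)
    (Rm : ℕ → Module.End R M)
    (hRm : ∀ i : ℕ, Rm i = ∑ k ∈ Finset.range i,
      ((-1 : ℤ) ^ k) • ((P * δ') ^ k * P * (ε * d) ^ (k + 1)))
    (i : ℕ) (j : ℤ) (x : M) (hx : x ∈ C j (-1)) :
    ((P * δ') ^ i) (((ε * d) ^ i) x)
      = x - (Rm i) (δ' x) - δ' ((Rm (i - 1)) x) := by
  obtain rfl : Rm = chainHomotopy d δ' ε P := funext hRm
  let H : Set M := ⋃ j, ⋃ k, (C j k : Set M)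
  have hH : ∀ {Q : M → Prop}, (∀ j k, ∀ y ∈ C j k, Q y) → ∀ y ∈ H, Q y := by
    simp only [H, mem_iUnion]
    rintro Q h y ⟨j, k, hy⟩
    exact h j k y hy
  exact PDelta_pow_epsD_pow_apply
    (hH fun j k y hy => mem_iUnion₂.2 ⟨_, _, hd_map j k y hy⟩)
    (hH fun j k y hy => mem_iUnion₂.2 ⟨_, _, hδ_map j k y hy⟩)
    (hH fun j k y hy => mem_iUnion₂.2 ⟨_, _, hε_map j k y hy⟩)
    (hH fun j k y hy => mem_iUnion₂.2 ⟨_, _, hP_map j k y hy⟩)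
    (hH hdd) (hH hδδ) (hH hdδ) (hH hεδ) (hH hdP) (mem_iUnion₂.2 ⟨j, -1, hx⟩)
    (PDelta_pow_P_epsD_pow_eq_zero (fun j k hk => hCzero j k (Or.inr hk))
      hd_map hδ_map hε_map hP_map hx) i

/-- `Ψ∘Φ` is homotopic to the identity on simplicial cochains:
with `R_i = Σ_{k<i} (−1)^k (Pδ)^k P (εd)^{k+1}`, one has, on `C^{j,−1}`,
`(Pδ)^i (εd)^i = 1 − R_i δ − δ R_{i−1}`. -/
theorem PsiPhi_homotopic_id {R M : Type*} [CommRing R] [AddCommGroup M] [Module R M]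
    (C : ℤ → ℤ → Submodule R M)
    (hCzero : ∀ j k : ℤ, (j ≤ -2 ∨ k ≤ -2) → C j k = ⊥)
    (d δ' ε P : Module.End R M)
    (hd_map : ∀ j k : ℤ, ∀ x ∈ C j k, d x ∈ C j (k + 1))
    (hδ_map : ∀ j k : ℤ, ∀ x ∈ C j k, δ' x ∈ C (j + 1) k)
    (hε_map : ∀ j k : ℤ, ∀ x ∈ C j k, ε x ∈ C (j - 1) k)
    (hP_map : ∀ j k : ℤ, ∀ x ∈ C j k, P x ∈ C j (k - 1))
    (hdd : ∀ j k : ℤ, ∀ x ∈ C j k, d (d x) = 0)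
    (hδδ : ∀ j k : ℤ, ∀ x ∈ C j k, δ' (δ' x) = 0)
    (hdδ : ∀ j k : ℤ, ∀ x ∈ C j k, d (δ' x) = δ' (d x))
    (hεδ : ∀ j k : ℤ, ∀ x ∈ C j k, ε (δ' x) + δ' (ε x) = x)
    (hdP : ∀ j k : ℤ, ∀ x ∈ C j k, d (P x) + P (d x) = x)
    (Rm : ℕ → Module.End R M)
    (hRm : ∀ i : ℕ, Rm i = ∑ k ∈ Finset.range i,
      ((-1 : ℤ) ^ k) • ((P * δ') ^ k * P * (ε * d) ^ (k + 1)))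
    (i : ℕ) (hi : 1 ≤ i) (j : ℤ) (x : M) (hx : x ∈ C j (-1)) :
    ((P * δ') ^ i) (((ε * d) ^ i) x)
      = x - (Rm i) (δ' x) - δ' ((Rm (i - 1)) x) :=
  PsiPhi_homotopic_id_general C hCzero d δ' ε P hd_map hδ_map hε_map hP_map hdd hδδ hdδ hεδ hdP Rm
    hRm i j x hx
end

section
/- For all real numbers p, q with 1 ≤ p < ∞ and 1 ≤ q < ∞, there exists a smooth function f : ℝ → ℝ such that every derivative f^{(k)} (k ≥ 0, including f itself) belongs to L^p(ℝ), while no differentiable function F : ℝ → ℝ with F′ = f belongs to L^q(ℝ). -/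
open MeasureTheory Set Real Filter

/-- A function bounded below in absolute value on an infinite-measure set is not in `L^q`. -/
lemma not_memLp_aux {F : ℝ → ℝ} {ε : ℝ} (hε : 0 < ε) {S : Set ℝ}
    (hS : MeasurableSet S) (hvol : volume S = ⊤) (hF : ∀ x ∈ S, ε ≤ |F x|)
    {q : ENNReal} (hq0 : q ≠ 0) (hqt : q ≠ ⊤) : ¬ MemLp F q volume := by
  intro h
  have h1 : MemLp F q (volume.restrict S) := h.restrict S
  have h2 : eLpNorm (fun _ : ℝ => ε) q (volume.restrict S) ≤
      eLpNorm F q (volume.restrict S) := by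
    apply eLpNorm_mono_ae
    refine (ae_restrict_iff' hS).2 (Filter.Eventually.of_forall fun x hx => ?_)
    simpa [Real.norm_eq_abs, abs_of_pos hε] using hF x hx
  rw [eLpNorm_const ε hq0 (by simp [Measure.restrict_apply_univ, hvol])] at h2
  simp only [Measure.restrict_apply_univ, hvol] at h2
  rw [ENNReal.top_rpow_of_pos (by have := ENNReal.toReal_pos hq0 hqt; positivity),
    ENNReal.mul_top (by simpa using hε.ne')] at h2
  exact absurd (lt_of_le_of_lt h2 h1.eLpNorm_lt_top) (by simp)

lemma pow_le_factorial_mul_exp (n : ℕ) {x : ℝ} (hx : 0 ≤ x) :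
    x ^ n ≤ (Nat.factorial n : ℝ) * Real.exp x := by
  have h := Real.sum_le_exp_of_nonneg hx (n + 1)
  have h1 : x ^ n / (Nat.factorial n : ℝ) ≤ ∑ i ∈ Finset.range (n + 1), x ^ i / (Nat.factorial i : ℝ) := by
    refine Finset.single_le_sum (f := fun i => x ^ i / (Nat.factorial i : ℝ)) (fun i _ => by positivity) ?_
    simp
  have h2 : x ^ n / (Nat.factorial n : ℝ) ≤ Real.exp x := h1.trans h
  have hn : (0:ℝ) < (Nat.factorial n : ℝ) := by exact_mod_cast Nat.factorial_pos n
  calc x ^ n = (Nat.factorial n : ℝ) * (x ^ n / (Nat.factorial n : ℝ)) := by field_simp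
    _ ≤ (Nat.factorial n : ℝ) * Real.exp x := by nlinarith [Real.exp_pos x]

/-- Polynomial times half-Gaussian factor bound. -/
lemma poly_bound (P : Polynomial ℝ) : ∃ C : ℝ, 0 ≤ C ∧
    ∀ x : ℝ, |P.eval x| ≤ C * Real.exp (x ^ 2 / 2) := by
  classical
  set n := P.natDegree
  refine ⟨(∑ i ∈ Finset.range (n + 1), |P.coeff i| * (Nat.factorial i : ℝ)) * Real.exp (1/2),
    by positivity, fun x => ?_⟩
  have habs : |x| ≤ 1/2 + x ^ 2 / 2 := by nlinarith [sq_nonneg (|x| - 1), sq_abs x]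
  have hexp : Real.exp |x| ≤ Real.exp (1/2) * Real.exp (x ^ 2 / 2) := by
    rw [← Real.exp_add]; exact Real.exp_le_exp.2 habs
  have h1 : |P.eval x| ≤ ∑ i ∈ Finset.range (n + 1), |P.coeff i| * |x| ^ i := by
    rw [Polynomial.eval_eq_sum_range]
    refine (Finset.abs_sum_le_sum_abs _ _).trans (le_of_eq ?_)
    congr 1; ext i; rw [abs_mul, abs_pow]
  have h2 : ∀ i, |P.coeff i| * |x| ^ i ≤ |P.coeff i| * ((Nat.factorial i : ℝ) * Real.exp |x|) :=
    fun i => mul_le_mul_of_nonneg_left (pow_le_factorial_mul_exp i (abs_nonneg x))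
      (abs_nonneg _)
  calc |P.eval x| ≤ ∑ i ∈ Finset.range (n + 1), |P.coeff i| * ((Nat.factorial i : ℝ) * Real.exp |x|) :=
        h1.trans (Finset.sum_le_sum fun i _ => h2 i)
    _ = (∑ i ∈ Finset.range (n + 1), |P.coeff i| * (Nat.factorial i : ℝ)) * Real.exp |x| := by
        rw [Finset.sum_mul]; congr 1; ext i; ring
    _ ≤ (∑ i ∈ Finset.range (n + 1), |P.coeff i| * (Nat.factorial i : ℝ)) * (Real.exp (1/2) * Real.exp (x ^ 2 / 2)) := by
        refine mul_le_mul_of_nonneg_left hexp ?_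
        positivity
    _ = (∑ i ∈ Finset.range (n + 1), |P.coeff i| * (Nat.factorial i : ℝ)) * Real.exp (1/2) * Real.exp (x ^ 2 / 2) := by
        ring

lemma hasDerivAt_polyGauss (P : Polynomial ℝ) (x : ℝ) :
    HasDerivAt (fun y => P.eval y * Real.exp (-y ^ 2))
      ((P.derivative - Polynomial.C 2 * Polynomial.X * P).eval x * Real.exp (-x ^ 2)) x := by
  have h1 : HasDerivAt (fun y : ℝ => -y ^ 2) (-(2 * x)) x := by
    have h := (hasDerivAt_pow 2 x).neg; norm_num at h; exact h
  have h2 : HasDerivAt (fun y => Real.exp (-y ^ 2)) (Real.exp (-x ^ 2) * (-(2 * x))) x :=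
    h1.exp
  have h3 : HasDerivAt (fun y => P.eval y * Real.exp (-y ^ 2)) _ x := (P.hasDerivAt x).mul h2
  convert h3 using 1
  simp [Polynomial.eval_mul, Polynomial.eval_sub]
  ring

lemma iter_deriv_gauss (k : ℕ) : ∃ P : Polynomial ℝ,
    deriv^[k] (fun x : ℝ => Real.exp (-x ^ 2)) = fun x => P.eval x * Real.exp (-x ^ 2) := by
  induction k with
  | zero => exact ⟨1, by funext x; simp⟩
  | succ n ih =>
    obtain ⟨P, hP⟩ := ih
    refine ⟨P.derivative - Polynomial.C 2 * Polynomial.X * P, ?_⟩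
    rw [Function.iterate_succ_apply', hP]
    funext x
    exact (hasDerivAt_polyGauss P x).deriv

lemma memLp_half_gauss (p : ℝ) (hp : 1 ≤ p) :
    MemLp (fun x : ℝ => Real.exp (-x ^ 2 / 2)) (ENNReal.ofReal p) volume := by
  have hp0 : (0:ℝ) < p := by linarith
  have h0 : ENNReal.ofReal p ≠ 0 := by simp [ENNReal.ofReal_eq_zero]; linarith
  have ht : ENNReal.ofReal p ≠ ⊤ := ENNReal.ofReal_ne_top
  have hmeas : AEStronglyMeasurable (fun x : ℝ => Real.exp (-x ^ 2 / 2)) volume :=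
    (Real.continuous_exp.comp (by continuity)).aestronglyMeasurable
  have key := memLp_norm_rpow_iff (p := ENNReal.ofReal p) (q := ENNReal.ofReal p)
    hmeas h0 ht
  rw [ENNReal.div_self h0 ht] at key
  rw [← key, memLp_one_iff_integrable]
  have : (fun x : ℝ => ‖Real.exp (-x ^ 2 / 2)‖ ^ (ENNReal.ofReal p).toReal)
      = fun x : ℝ => Real.exp (-(p/2) * x ^ 2) := by
    funext x
    rw [Real.norm_eq_abs, abs_of_pos (Real.exp_pos _), ENNReal.toReal_ofReal hp0.le,
      ← Real.exp_mul]
    ring_nf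
  rw [this]
  exact integrable_exp_neg_mul_sq (by linarith)

/-- Nonvanishing of `ℓ^{q,p}H¹(ℝ)`: for all `1 ≤ p, q < ∞` there is a smooth function all
of whose derivatives are in `L^p`, admitting no primitive in `L^q`. -/
theorem exists_Lp_function_without_Lq_primitive (p q : ℝ) (hp : 1 ≤ p) (hq : 1 ≤ q) :
    ∃ f : ℝ → ℝ, ContDiff ℝ (⊤ : ℕ∞) f ∧
      (∀ k : ℕ, MemLp (deriv^[k] f) (ENNReal.ofReal p) volume) ∧
      ∀ F : ℝ → ℝ, (∀ x : ℝ, HasDerivAt F (f x) x) →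
        ¬ MemLp F (ENNReal.ofReal q) volume := by
  set f : ℝ → ℝ := fun x => Real.exp (-x ^ 2) with hf
  have hcont : Continuous f := Real.continuous_exp.comp (by continuity)
  refine ⟨f, Real.contDiff_exp.comp ((contDiff_id.pow 2).neg), ?_, ?_⟩
  · intro k
    obtain ⟨P, hP⟩ := iter_deriv_gauss k
    obtain ⟨C, hC0, hC⟩ := poly_bound P
    rw [hf, hP]
    refine MemLp.of_le_mul (c := C) (memLp_half_gauss p hp)
      ((P.continuous_aeval.mul hcont).aestronglyMeasurable) ?_
    refine Filter.Eventually.of_forall fun x => ?_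
    rw [Real.norm_eq_abs, Real.norm_eq_abs, abs_mul, abs_of_pos (Real.exp_pos _),
      abs_of_pos (Real.exp_pos _)]
    calc |P.eval x| * Real.exp (-x ^ 2)
        ≤ (C * Real.exp (x ^ 2 / 2)) * Real.exp (-x ^ 2) :=
          mul_le_mul_of_nonneg_right (hC x) (Real.exp_pos _).le
      _ = C * Real.exp (-x ^ 2 / 2) := by rw [mul_assoc, ← Real.exp_add]; ring_nf
  · intro F hF hmem
    have hq0 : (ENNReal.ofReal q) ≠ 0 := by simp [ENNReal.ofReal_eq_zero]; linarith
    have hqt : (ENNReal.ofReal q) ≠ ⊤ := ENNReal.ofReal_ne_top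
    have hint : ∀ a c : ℝ, IntervalIntegrable f volume a c :=
      fun a c => hcont.intervalIntegrable a c
    have hftc : ∀ a c : ℝ, F c - F a = ∫ x in a..c, f x := fun a c =>
      (intervalIntegral.integral_eq_sub_of_hasDerivAt (fun x _ => hF x) (hint a c)).symm
    have hpos : 0 < F 2 - F (-2) := by
      rw [hftc]
      exact intervalIntegral.intervalIntegral_pos_of_pos (hint _ _)
        (fun x => Real.exp_pos _) (by norm_num)
    have hmono : ∀ a c : ℝ, a ≤ c → F a ≤ F c := by
      intro a c hac
      have h1 : 0 ≤ ∫ x in a..c, f x :=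
        intervalIntegral.integral_nonneg hac (fun x _ => (Real.exp_pos _).le)
      have := hftc a c
      linarith
    rcases lt_or_ge 0 (F 2) with h2 | h2
    · refine not_memLp_aux (S := Set.Ici (2:ℝ)) h2 measurableSet_Ici (by simp) (fun x hx => ?_) hq0 hqt hmem
      have := hmono 2 x hx
      rw [abs_of_pos (by linarith)]; linarith
    · have h2' : F (-2) < 0 := by linarith
      refine not_memLp_aux (S := Set.Iic (-2:ℝ)) (neg_pos.2 h2') measurableSet_Iic (by simp)
        (fun x hx => ?_) hq0 hqt hmem
      have := hmono x (-2) hx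
      rw [abs_of_neg (by linarith)]; linarith
end
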